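/- arXiv:math/0503113 — 9 statements merged into one kernel-verified Lean document; each statement's English description precedes it below -/
import Mathlib

section
/- Let z₁, z₂, w₁, w₂ : Primes → ℂ be sequences indexed by primes with all values of modulus at most 1, and let y ≥ 2. Define D(z,w;y) = (∑_{p ≤ y prime} (1 - Re(z(p) · conj(w(p))))/p)^{1/2}. Then D(z₁,w₁;y) + D(z₂,w₂;y) ≥ D(z₁z₂, w₁w₂; y), where products of sequences are taken componentwise. -/
/-!
Writing `A = 1 - Re a` and `B = 1 - Re b`, one has
`1 - Re (a b) = A + B - Re ((1 - a)(1 - b))`, and on the unit disc `‖1 - a‖² ≤ 2A`, so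
`1 - Re (a b) ≤ (√A + √B)²` pointwise. Summing with the weights `1/p`, Minkowski's inequality
in `ℓ²` turns this into the triangle inequality for the pretentious distance.
-/

open Complex Finset

namespace Complex

lemma one_sub_re_nonneg {a : ℂ} (ha : ‖a‖ ≤ 1) : 0 ≤ 1 - a.re :=
  sub_nonneg.2 ((re_le_norm a).trans ha)

lemma norm_one_sub_le_sqrt_two_mul_sqrt {a : ℂ} (ha : ‖a‖ ≤ 1) :
    ‖1 - a‖ ≤ √2 * √(1 - a.re) := by
  rw [← Real.sqrt_mul zero_le_two, Real.le_sqrt (norm_nonneg _)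
    (mul_nonneg zero_le_two (one_sub_re_nonneg ha)), Complex.sq_norm, normSq_apply]
  have h : ‖a‖ ^ 2 ≤ 1 := pow_le_one₀ (norm_nonneg a) ha
  rw [Complex.sq_norm, normSq_apply] at h
  simp only [sub_re, sub_im, one_re, one_im]
  nlinarith

lemma one_sub_re_mul_le_sq {a b : ℂ} (ha : ‖a‖ ≤ 1) (hb : ‖b‖ ≤ 1) :
    1 - (a * b).re ≤ (√(1 - a.re) + √(1 - b.re)) ^ 2 := by
  have hid : 1 - (a * b).re = (1 - a.re) + (1 - b.re) - ((1 - a) * (1 - b)).re := by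
    simp only [mul_re, sub_re, sub_im, one_re, one_im]; ring
  have hre : -((1 - a) * (1 - b)).re ≤ ‖1 - a‖ * ‖1 - b‖ := by
    rw [← norm_mul]; exact neg_le.1 (abs_le.1 (abs_re_le_norm _)).1
  have hprod : ‖1 - a‖ * ‖1 - b‖ ≤ 2 * (√(1 - a.re) * √(1 - b.re)) :=
    calc ‖1 - a‖ * ‖1 - b‖ ≤ (√2 * √(1 - a.re)) * (√2 * √(1 - b.re)) :=
          mul_le_mul (norm_one_sub_le_sqrt_two_mul_sqrt ha) (norm_one_sub_le_sqrt_two_mul_sqrt hb)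
            (norm_nonneg _) (by positivity)
      _ = 2 * (√(1 - a.re) * √(1 - b.re)) := by
          linear_combination (√(1 - a.re) * √(1 - b.re)) * Real.mul_self_sqrt zero_le_two
  rw [add_sq, Real.sq_sqrt (one_sub_re_nonneg ha), Real.sq_sqrt (one_sub_re_nonneg hb)]
  linarith

end Complex

section Minkowski

variable {ι : Type*} {s : Finset ι} {f g h : ι → ℝ}

lemma Real.sqrt_sum_le_sqrt_sum_add_sqrt_sum (hf : ∀ i ∈ s, 0 ≤ f i) (hg : ∀ i ∈ s, 0 ≤ g i)
    (hh : ∀ i ∈ s, h i ≤ (√(f i) + √(g i)) ^ 2) :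
    √(∑ i ∈ s, h i) ≤ √(∑ i ∈ s, f i) + √(∑ i ∈ s, g i) := by
  have hsq : ∀ {u : ι → ℝ}, (∀ i ∈ s, 0 ≤ u i) → ∑ i ∈ s, √(u i) ^ 2 = ∑ i ∈ s, u i :=
    fun hu ↦ sum_congr rfl fun i hi ↦ Real.sq_sqrt (hu i hi)
  have hcs := Real.sum_mul_le_sqrt_mul_sqrt s (fun i ↦ √(f i)) (fun i ↦ √(g i))
  rw [hsq hf, hsq hg] at hcs
  refine Real.sqrt_le_iff.2 ⟨by positivity, ?_⟩
  calc ∑ i ∈ s, h i ≤ ∑ i ∈ s, (√(f i) + √(g i)) ^ 2 := sum_le_sum hh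
    _ = ∑ i ∈ s, f i + 2 * ∑ i ∈ s, √(f i) * √(g i) + ∑ i ∈ s, g i := by
        simp only [add_sq, sum_add_distrib, mul_sum, hsq hf, hsq hg]
        congr 1; congr 1; exact sum_congr rfl fun i _ ↦ by ring
    _ ≤ (√(∑ i ∈ s, f i) + √(∑ i ∈ s, g i)) ^ 2 := by
        rw [add_sq, Real.sq_sqrt (sum_nonneg hf), Real.sq_sqrt (sum_nonneg hg)]
        linarith

end Minkowski

lemma Complex.sqrt_sum_one_sub_re_mul_le {ι : Type*} {s : Finset ι} {a b : ι → ℂ} {c : ι → ℝ}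
    (ha : ∀ i ∈ s, ‖a i‖ ≤ 1) (hb : ∀ i ∈ s, ‖b i‖ ≤ 1) (hc : ∀ i ∈ s, 0 ≤ c i) :
    √(∑ i ∈ s, c i * (1 - (a i * b i).re)) ≤
      √(∑ i ∈ s, c i * (1 - (a i).re)) + √(∑ i ∈ s, c i * (1 - (b i).re)) := by
  refine Real.sqrt_sum_le_sqrt_sum_add_sqrt_sum
    (fun i hi ↦ mul_nonneg (hc i hi) (one_sub_re_nonneg (ha i hi)))
    (fun i hi ↦ mul_nonneg (hc i hi) (one_sub_re_nonneg (hb i hi))) fun i hi ↦ ?_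
  rw [Real.sqrt_mul (hc i hi), Real.sqrt_mul (hc i hi), ← mul_add, mul_pow,
    Real.sq_sqrt (hc i hi)]
  exact mul_le_mul_of_nonneg_left (one_sub_re_mul_le_sq (ha i hi) (hb i hi)) (hc i hi)

theorem pretentious_triangle_inequality_general
    (z₁ z₂ w₁ w₂ : ℕ → ℂ)
    (hz₁ : ∀ p : ℕ, p.Prime → ‖z₁ p‖ ≤ 1) (hz₂ : ∀ p : ℕ, p.Prime → ‖z₂ p‖ ≤ 1)
    (hw₁ : ∀ p : ℕ, p.Prime → ‖w₁ p‖ ≤ 1) (hw₂ : ∀ p : ℕ, p.Prime → ‖w₂ p‖ ≤ 1)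
    (y : ℝ) :
    Real.sqrt (∑ p ∈ (Finset.Iic ⌊y⌋₊).filter Nat.Prime,
        (1 - (z₁ p * (starRingEnd ℂ) (w₁ p)).re) / p)
      + Real.sqrt (∑ p ∈ (Finset.Iic ⌊y⌋₊).filter Nat.Prime,
        (1 - (z₂ p * (starRingEnd ℂ) (w₂ p)).re) / p)
      ≥ Real.sqrt (∑ p ∈ (Finset.Iic ⌊y⌋₊).filter Nat.Prime,
        (1 - ((z₁ p * z₂ p) * (starRingEnd ℂ) (w₁ p * w₂ p)).re) / p) := by
  have hnorm : ∀ z w : ℕ → ℂ, (∀ p : ℕ, p.Prime → ‖z p‖ ≤ 1) → (∀ p : ℕ, p.Prime → ‖w p‖ ≤ 1) →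
      ∀ p ∈ (Finset.Iic ⌊y⌋₊).filter Nat.Prime, ‖z p * (starRingEnd ℂ) (w p)‖ ≤ 1 :=
    fun z w hz hw p hp ↦ by
      have hp := (mem_filter.1 hp).2
      rw [norm_mul, RCLike.norm_conj]
      exact mul_le_one₀ (hz p hp) (norm_nonneg _) (hw p hp)
  have hprod : ∀ p, (z₁ p * z₂ p) * (starRingEnd ℂ) (w₁ p * w₂ p) =
      (z₁ p * (starRingEnd ℂ) (w₁ p)) * (z₂ p * (starRingEnd ℂ) (w₂ p)) :=
    fun p ↦ by rw [map_mul]; ring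
  simp only [div_eq_inv_mul, hprod]
  exact sqrt_sum_one_sub_re_mul_le (hnorm z₁ w₁ hz₁ hw₁) (hnorm z₂ w₂ hz₂ hw₂)
    fun p _ ↦ inv_nonneg.2 (Nat.cast_nonneg p)

theorem pretentious_triangle_inequality
    (z₁ z₂ w₁ w₂ : ℕ → ℂ)
    (hz₁ : ∀ p : ℕ, p.Prime → ‖z₁ p‖ ≤ 1) (hz₂ : ∀ p : ℕ, p.Prime → ‖z₂ p‖ ≤ 1)
    (hw₁ : ∀ p : ℕ, p.Prime → ‖w₁ p‖ ≤ 1) (hw₂ : ∀ p : ℕ, p.Prime → ‖w₂ p‖ ≤ 1)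
    (y : ℝ) (hy : 2 ≤ y) :
    Real.sqrt (∑ p ∈ (Finset.Iic ⌊y⌋₊).filter Nat.Prime,
        (1 - (z₁ p * (starRingEnd ℂ) (w₁ p)).re) / p)
      + Real.sqrt (∑ p ∈ (Finset.Iic ⌊y⌋₊).filter Nat.Prime,
        (1 - (z₂ p * (starRingEnd ℂ) (w₂ p)).re) / p)
      ≥ Real.sqrt (∑ p ∈ (Finset.Iic ⌊y⌋₊).filter Nat.Prime,
        (1 - ((z₁ p * z₂ p) * (starRingEnd ℂ) (w₁ p * w₂ p)).re) / p) :=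
  pretentious_triangle_inequality_general z₁ z₂ w₁ w₂ hz₁ hz₂ hw₁ hw₂ y
end

section
/- For complex numbers w₁, w₂ with |w₁| ≤ 1 and |w₂| ≤ 1, we have (1 - Re w₁) + (1 - Re w₂) + 2·√(1 - Re w₁)·√(1 - Re w₂) ≥ 1 - Re(w₁ w₂). -/
/-! Write `1 - Re(w₁w₂) = a + b - ab + Im w₁ Im w₂` with `a = 1 - Re w₁`, `b = 1 - Re w₂`.
On the closed unit disc `(Im w)² ≤ 1 - (Re w)² ≤ 2 (1 - Re w)`, so `Im w₁ Im w₂ ≤ 2 √a √b`,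
and the claim follows since `ab ≥ 0`. -/

open Complex

namespace Complex

theorem sq_im_le_two_mul_one_sub_re {w : ℂ} (hw : ‖w‖ ≤ 1) : w.im ^ 2 ≤ 2 * (1 - w.re) := by
  have hre : |w.re| ≤ 1 := (abs_re_le_norm w).trans hw
  have hnormSq : w.re ^ 2 + w.im ^ 2 ≤ 1 := by
    rw [sq, sq, ← normSq_apply, normSq_eq_norm_sq]
    exact pow_le_one₀ (norm_nonneg w) hw
  nlinarith [abs_le.1 hre]

theorem abs_im_le_sqrt_two_mul_sqrt_one_sub_re {w : ℂ} (hw : ‖w‖ ≤ 1) :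
    |w.im| ≤ √2 * √(1 - w.re) := by
  rw [← Real.sqrt_mul zero_le_two]
  exact Real.abs_le_sqrt (sq_im_le_two_mul_one_sub_re hw)

theorem im_mul_im_le_two_mul_sqrt_one_sub_re_mul_sqrt_one_sub_re {w₁ w₂ : ℂ}
    (h₁ : ‖w₁‖ ≤ 1) (h₂ : ‖w₂‖ ≤ 1) :
    w₁.im * w₂.im ≤ 2 * √(1 - w₁.re) * √(1 - w₂.re) :=
  calc w₁.im * w₂.im ≤ |w₁.im| * |w₂.im| := by rw [← abs_mul]; exact le_abs_self _
    _ ≤ (√2 * √(1 - w₁.re)) * (√2 * √(1 - w₂.re)) :=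
      mul_le_mul (abs_im_le_sqrt_two_mul_sqrt_one_sub_re h₁)
        (abs_im_le_sqrt_two_mul_sqrt_one_sub_re h₂) (abs_nonneg _) (by positivity)
    _ = 2 * √(1 - w₁.re) * √(1 - w₂.re) := by
      rw [mul_mul_mul_comm, Real.mul_self_sqrt zero_le_two, mul_assoc]

theorem one_sub_mul_re (w₁ w₂ : ℂ) :
    1 - (w₁ * w₂).re
      = (1 - w₁.re) + (1 - w₂.re) - (1 - w₁.re) * (1 - w₂.re) + w₁.im * w₂.im := by
  rw [mul_re]; ring

end Complex

theorem pointwise_triangle_ineq (w₁ w₂ : ℂ) (h₁ : ‖w₁‖ ≤ 1) (h₂ : ‖w₂‖ ≤ 1) :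
    (1 - w₁.re) + (1 - w₂.re)
      + 2 * Real.sqrt (1 - w₁.re) * Real.sqrt (1 - w₂.re)
      ≥ 1 - (w₁ * w₂).re := by
  have ha : 0 ≤ 1 - w₁.re := sub_nonneg.2 ((re_le_norm w₁).trans h₁)
  have hb : 0 ≤ 1 - w₂.re := sub_nonneg.2 ((re_le_norm w₂).trans h₂)
  rw [one_sub_mul_re]
  linarith [mul_nonneg ha hb, im_mul_im_le_two_mul_sqrt_one_sub_re_mul_sqrt_one_sub_re h₁ h₂]
end

section
/- Let χ be a Dirichlet character mod q induced by the primitive character χ' mod q', where q' divides q. Then the Gauss sum satisfies τ(χ) = μ(q/q') · χ'(q/q') · τ(χ'), where μ is the Möbius function and τ(ψ) = ∑_{a mod n} ψ(a) e(a/n) with e(x) = exp(2πix). -/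
open Complex DirichletCharacter

/-- The Gauss sum `τ(χ) = ∑_{a mod n} χ(a) e(a/n)` of a Dirichlet character mod `n`. -/
noncomputable def gaussSum' (n : ℕ) [NeZero n] (χ : DirichletCharacter ℂ n) : ℂ :=
  ∑ a : ZMod n, χ a * Complex.exp (2 * Real.pi * Complex.I * (a.val : ℂ) / (n : ℂ))

open Finset in
private noncomputable def Eexp (m a : ℕ) : ℂ := Complex.exp (2 * Real.pi * Complex.I * a / m)

section helpers
open Finset

lemma gaussSum'_eq_range (n : ℕ) [NeZero n] (ψ : DirichletCharacter ℂ n) :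
    (∑ a : ZMod n, ψ a * Complex.exp (2 * Real.pi * Complex.I * ((a.val : ℕ) : ℂ) / (n : ℂ)))
      = ∑ a ∈ range n, ψ a * Eexp n a := by
  refine Finset.sum_nbij' (fun a => a.val) (fun a => (a : ZMod n)) ?_ ?_ ?_ ?_ ?_
  · intro a _; exact mem_range.2 (ZMod.val_lt a)
  · intro a _; exact mem_univ _
  · intro a _; exact ZMod.natCast_rightInverse a
  · intro a ha; exact ZMod.val_natCast_of_lt (mem_range.1 ha)
  · intro a _; simp [Eexp, ZMod.natCast_val]

lemma moebius_sum (n : ℕ) (hn : n ≠ 0) :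
    ∑ d ∈ n.divisors, ((ArithmeticFunction.moebius d : ℤ) : ℂ) = if n = 1 then 1 else 0 := by
  have h := congrArg (fun f => f n) (ArithmeticFunction.coe_moebius_mul_coe_zeta (R := ℂ))
  simp only [ArithmeticFunction.mul_apply, ArithmeticFunction.one_apply,
    ArithmeticFunction.intCoe_apply, ArithmeticFunction.natCoe_apply] at h
  rw [← h, Nat.sum_divisorsAntidiagonal
    (fun x y => ((ArithmeticFunction.moebius x : ℤ) : ℂ) * ((ArithmeticFunction.zeta y : ℕ) : ℂ))]
  refine Finset.sum_congr rfl fun d hd => ?_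
  have hd' : n / d ≠ 0 := (Nat.div_pos (Nat.le_of_dvd (Nat.pos_of_ne_zero hn)
    (Nat.dvd_of_mem_divisors hd)) (Nat.pos_of_mem_divisors hd)).ne'
  rw [ArithmeticFunction.zeta_apply_ne hd']
  simp

lemma geom_exp_sum (k : ℕ) (hk : 2 ≤ k) :
    ∑ j ∈ range k, Complex.exp (2 * Real.pi * Complex.I * j / k) = 0 := by
  have hk0 : (k : ℂ) ≠ 0 := Nat.cast_ne_zero.2 (by omega)
  have hx : ∀ j ∈ range k, Complex.exp (2 * Real.pi * Complex.I * j / k)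
      = (Complex.exp (2 * Real.pi * Complex.I / k)) ^ j := by
    intro j _
    rw [← Complex.exp_nat_mul]
    ring_nf
  rw [Finset.sum_congr rfl hx]
  have h2 : (2 * (Real.pi : ℂ) * Complex.I) ≠ 0 := by
    simp [Real.pi_ne_zero, Complex.I_ne_zero]
  have hne : Complex.exp (2 * Real.pi * Complex.I / k) ≠ 1 := by
    intro h1
    rw [Complex.exp_eq_one_iff] at h1
    obtain ⟨m, hm⟩ := h1
    rw [div_eq_iff hk0] at hm
    have hmk : (1 : ℂ) * (2 * Real.pi * Complex.I) = ((m * k : ℤ) : ℂ) * (2 * Real.pi * Complex.I) := by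
      push_cast
      linear_combination hm
    have := mul_right_cancel₀ h2 hmk
    have h1' : (1 : ℤ) = m * k := by exact_mod_cast this
    have hdk : (k : ℤ) ∣ 1 := ⟨m, by linarith⟩
    have := Int.le_of_dvd one_pos hdk
    have : (2 : ℤ) ≤ k := by exact_mod_cast hk
    omega
  rw [geom_sum_eq hne]
  have hpow : Complex.exp (2 * Real.pi * Complex.I / k) ^ k = 1 := by
    rw [← Complex.exp_nat_mul, mul_div_cancel₀ _ hk0]
    exact Complex.exp_two_pi_mul_I
  rw [hpow, sub_self, zero_div]

lemma S_mul_eq_zero (q' k : ℕ) [NeZero q'] (χ' : DirichletCharacter ℂ q') (hk : 2 ≤ k) :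
    ∑ b ∈ range (q' * k), χ' b * Eexp (q' * k) b = 0 := by
  have hq0 : (q' : ℂ) ≠ 0 := Nat.cast_ne_zero.2 (NeZero.ne q')
  have hk0 : (k : ℂ) ≠ 0 := Nat.cast_ne_zero.2 (by omega)
  have hre : ∑ b ∈ range (q' * k), χ' b * Eexp (q' * k) b
      = ∑ p ∈ range k ×ˢ range q', χ' ((q' * p.1 + p.2 : ℕ) : ZMod q') * Eexp (q' * k) (q' * p.1 + p.2) := by
    refine (Finset.sum_nbij' (fun p => q' * p.1 + p.2) (fun b => (b / q', b % q'))
      ?_ ?_ ?_ ?_ ?_).symm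
    · intro p hp
      rw [mem_product, mem_range, mem_range] at hp
      rw [mem_range]
      calc q' * p.1 + p.2 < q' * p.1 + q' := by omega
        _ ≤ q' * k := by rw [← Nat.mul_succ]; exact Nat.mul_le_mul_left _ hp.1
    · intro b hb
      rw [mem_range] at hb
      rw [mem_product, mem_range, mem_range]
      constructor
      · exact Nat.div_lt_of_lt_mul hb
      · exact Nat.mod_lt _ (Nat.pos_of_ne_zero (NeZero.ne q'))
    · intro p hp
      rw [mem_product, mem_range, mem_range] at hp
      simp [Nat.mul_add_div (Nat.pos_of_ne_zero (NeZero.ne q')), Nat.mul_add_mod,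
        Nat.div_eq_of_lt hp.2, Nat.mod_eq_of_lt hp.2]
    · intro b _
      show q' * (b / q') + b % q' = b
      exact Nat.div_add_mod b q'
    · intro p _; rfl
  rw [hre, Finset.sum_product]
  have key : ∀ j ∈ range k, ∀ r ∈ range q',
      χ' ((q' * j + r : ℕ) : ZMod q') * Eexp (q' * k) (q' * j + r)
      = Complex.exp (2 * Real.pi * Complex.I * j / k) * (χ' r * Eexp (q' * k) r) := by
    intro j _ r _
    have hcast : ((q' * j + r : ℕ) : ZMod q') = (r : ℕ) := by
      push_cast
      simp [ZMod.natCast_self]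
    have hexp : Eexp (q' * k) (q' * j + r)
        = Complex.exp (2 * Real.pi * Complex.I * j / k) * Eexp (q' * k) r := by
      rw [Eexp, Eexp, ← Complex.exp_add]
      congr 1
      push_cast
      field_simp
    rw [hcast, hexp]
    ring
  calc ∑ j ∈ range k, ∑ r ∈ range q', χ' ((q' * j + r : ℕ) : ZMod q') * Eexp (q' * k) (q' * j + r)
      = ∑ j ∈ range k, Complex.exp (2 * Real.pi * Complex.I * j / k)
          * ∑ r ∈ range q', χ' r * Eexp (q' * k) r := by
        refine Finset.sum_congr rfl fun j hj => ?_
        rw [Finset.mul_sum]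
        exact Finset.sum_congr rfl fun r hr => key j hj r hr
    _ = (∑ j ∈ range k, Complex.exp (2 * Real.pi * Complex.I * j / k))
          * ∑ r ∈ range q', χ' r * Eexp (q' * k) r := by rw [Finset.sum_mul]
    _ = 0 := by rw [geom_exp_sum k hk, zero_mul]

end helpers

open Finset in
theorem gauss_sum_induced (q q' : ℕ) [NeZero q] [NeZero q'] (hdvd : q' ∣ q)
    (χ' : DirichletCharacter ℂ q') (hχ' : χ'.IsPrimitive)
    (χ : DirichletCharacter ℂ q) (hind : χ = DirichletCharacter.changeLevel hdvd χ') :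
    gaussSum' q χ =
      (ArithmeticFunction.moebius (q / q') : ℂ) * χ' ((q / q' : ℕ) : ZMod q')
        * gaussSum' q' χ' := by
  have hq : q ≠ 0 := NeZero.ne q
  have hq' : q' ≠ 0 := NeZero.ne q'
  -- step 1: rewrite as a range sum
  rw [gaussSum', gaussSum'_eq_range]
  -- step 2: χ a = (if coprime) * χ' a
  have hchi : ∀ a : ℕ, χ ((a : ℕ) : ZMod q)
      = (if Nat.Coprime a q then (1:ℂ) else 0) * χ' ((a : ℕ) : ZMod q') := by
    intro a
    by_cases hco : Nat.Coprime a q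
    · have hu : IsUnit ((a : ℕ) : ZMod q) := (ZMod.isUnit_iff_coprime a q).2 hco
      rw [if_pos hco, one_mul, hind, ← hu.unit_spec,
        DirichletCharacter.changeLevel_eq_cast_of_dvd χ' hdvd hu.unit]
      congr 1
      rw [hu.unit_spec, ← ZMod.castHom_apply (h := hdvd), map_natCast]
    · have hu : ¬ IsUnit ((a : ℕ) : ZMod q) := fun h => hco ((ZMod.isUnit_iff_coprime a q).1 h)
      rw [if_neg hco, zero_mul, hind, MulChar.map_nonunit _ hu]
  -- step 3: indicator = moebius sum over divisors of gcd
  have hind2 : ∀ a ∈ range q, χ ((a : ℕ) : ZMod q) * Eexp q a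
      = ∑ d ∈ q.divisors.filter (· ∣ a), ((ArithmeticFunction.moebius d : ℤ) : ℂ)
          * (χ' ((a : ℕ) : ZMod q') * Eexp q a) := by
    intro a _
    have hgcd : Nat.gcd a q ≠ 0 := fun h => hq (Nat.eq_zero_of_gcd_eq_zero_right h)
    have hfil : q.divisors.filter (· ∣ a) = (Nat.gcd a q).divisors := by
      ext d
      simp only [Nat.mem_divisors, Finset.mem_filter, Nat.dvd_gcd_iff]
      tauto
    rw [hfil, ← Finset.sum_mul, moebius_sum _ hgcd, hchi a]
    simp only [Nat.Coprime]
    ring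
  rw [Finset.sum_congr rfl hind2]
  -- step 4: swap sums
  have hswap : ∑ a ∈ range q, ∑ d ∈ q.divisors.filter (· ∣ a),
        ((ArithmeticFunction.moebius d : ℤ) : ℂ) * (χ' ((a : ℕ) : ZMod q') * Eexp q a)
      = ∑ d ∈ q.divisors, ∑ a ∈ (range q).filter (fun a => d ∣ a),
        ((ArithmeticFunction.moebius d : ℤ) : ℂ) * (χ' ((a : ℕ) : ZMod q') * Eexp q a) := by
    simp only [Finset.sum_filter]
    exact Finset.sum_comm
  rw [hswap]
  -- step 5: reindex inner sum a = d * b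
  have hinner : ∀ d ∈ q.divisors,
      ∑ a ∈ (range q).filter (fun a => d ∣ a),
        ((ArithmeticFunction.moebius d : ℤ) : ℂ) * (χ' ((a : ℕ) : ZMod q') * Eexp q a)
      = ((ArithmeticFunction.moebius d : ℤ) : ℂ) * χ' ((d : ℕ) : ZMod q')
          * ∑ b ∈ range (q / d), χ' ((b : ℕ) : ZMod q') * Eexp (q / d) b := by
    intro d hd
    obtain ⟨hdq, -⟩ := Nat.mem_divisors.1 hd
    have hd0 : d ≠ 0 := fun h => hq (by simpa [h] using hdq)
    have hre : ∑ a ∈ (range q).filter (fun a => d ∣ a),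
          ((ArithmeticFunction.moebius d : ℤ) : ℂ) * (χ' ((a : ℕ) : ZMod q') * Eexp q a)
        = ∑ b ∈ range (q / d),
          ((ArithmeticFunction.moebius d : ℤ) : ℂ) * (χ' ((d * b : ℕ) : ZMod q') * Eexp q (d * b)) := by
      refine (Finset.sum_nbij' (fun b => d * b) (fun a => a / d) ?_ ?_ ?_ ?_ ?_).symm
      · intro b hb
        rw [mem_range] at hb
        rw [mem_filter, mem_range]
        refine ⟨?_, Dvd.intro _ rfl⟩
        calc d * b < d * (q / d) :=
              Nat.mul_lt_mul_of_le_of_lt (le_refl d) hb (Nat.pos_of_ne_zero hd0)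
          _ = q := Nat.mul_div_cancel' hdq
      · intro a ha
        rw [mem_filter, mem_range] at ha
        rw [mem_range]
        exact Nat.div_lt_div_of_lt_of_dvd hdq ha.1
      · intro b hb
        exact Nat.mul_div_cancel_left b (Nat.pos_of_ne_zero hd0)
      · intro a ha
        rw [mem_filter] at ha
        exact Nat.mul_div_cancel' ha.2
      · intro b _; rfl
    rw [hre]
    have hterm : ∀ b ∈ range (q / d),
        ((ArithmeticFunction.moebius d : ℤ) : ℂ) * (χ' ((d * b : ℕ) : ZMod q') * Eexp q (d * b))
        = ((ArithmeticFunction.moebius d : ℤ) : ℂ) * χ' ((d : ℕ) : ZMod q')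
            * (χ' ((b : ℕ) : ZMod q') * Eexp (q / d) b) := by
      intro b _
      have h1 : ((d * b : ℕ) : ZMod q') = ((d : ℕ) : ZMod q') * ((b : ℕ) : ZMod q') := by push_cast; ring
      have h2 : Eexp q (d * b) = Eexp (q / d) b := by
        rw [Eexp, Eexp]
        congr 1
        have hqd : (q : ℂ) = (d : ℂ) * ((q / d : ℕ) : ℂ) := by
          rw [← Nat.cast_mul, Nat.mul_div_cancel' hdq]
        have hqdn : q / d ≠ 0 :=
          (Nat.div_pos (Nat.le_of_dvd (Nat.pos_of_ne_zero hq) hdq) (Nat.pos_of_ne_zero hd0)).ne'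
        have hqd0 : ((q / d : ℕ) : ℂ) ≠ 0 := Nat.cast_ne_zero.2 hqdn
        have hdc0 : (d : ℂ) ≠ 0 := Nat.cast_ne_zero.2 hd0
        rw [hqd]
        push_cast
        field_simp
      rw [h1, h2, map_mul]
      ring
    rw [Finset.sum_congr rfl hterm, ← Finset.mul_sum]
  rw [Finset.sum_congr rfl hinner]
  -- step 6: all terms vanish except d = q / q'
  have hd0mem : q / q' ∈ q.divisors := Nat.mem_divisors.2 ⟨Nat.div_dvd_of_dvd hdvd, hq⟩
  rw [Finset.sum_eq_single_of_mem (q / q') hd0mem]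
  · rw [Nat.div_div_self hdvd hq, gaussSum', gaussSum'_eq_range]
  · intro d hd hne
    obtain ⟨hdq, -⟩ := Nat.mem_divisors.1 hd
    have hd0 : d ≠ 0 := fun h => hq (by simpa [h] using hdq)
    by_cases hu : IsUnit ((d : ℕ) : ZMod q')
    · -- χ'(d) ≠ 0 case: show inner sum is zero
      have hco : Nat.Coprime d q' := (ZMod.isUnit_iff_coprime d q').1 hu
      have hqd : q = d * (q / d) := (Nat.mul_div_cancel' hdq).symm
      have hdvd' : q' ∣ q / d := (Nat.Coprime.dvd_of_dvd_mul_left hco.symm (hqd ▸ hdvd))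
      obtain ⟨k, hqdk⟩ := hdvd'
      have hqdn : q / d ≠ 0 :=
        (Nat.div_pos (Nat.le_of_dvd (Nat.pos_of_ne_zero hq) hdq) (Nat.pos_of_ne_zero hd0)).ne'
      have hk0 : k ≠ 0 := by
        intro h
        rw [h, mul_zero] at hqdk
        exact hqdn hqdk
      have hk1 : k ≠ 1 := by
        intro h
        apply hne
        have hqd' : q / d = q' := by rw [hqdk, h, mul_one]
        have hdd : d = q / (q / d) := (Nat.div_div_self hdq hq).symm
        rw [hdd, hqd']
      have : (2 : ℕ) ≤ k := by omega
      rw [hqdk, S_mul_eq_zero q' k χ' this, mul_zero]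
    · rw [MulChar.map_nonunit _ hu, mul_zero, zero_mul]
end

section
/- Let ℓ be a squarefree positive integer (or any positive integer). Then ∑_{u ≥ 1, all prime factors of u divide ℓ} (log u)/u ≪ (log log(ℓ+2))², with an absolute implied constant. -/
/-!
Let `K = ∑_{p ∣ ℓ} log p / (p - 1)` and `Z = ∏_{p ∣ ℓ} (1 - p⁻¹)⁻¹`. Writing an `ℓ`-smooth number as
`p ^ k * m` one prime at a time shows that the series equals `K * Z`: it is minus the logarithmic
derivative of the Euler product at `1`, times the product. Primes `p ≤ log ℓ` contribute
`≪ log log ℓ` to `K` by Mertens' first theorem (from Chebyshev's `θ(N) ≤ N log 4`), the larger ones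
at most `(∑_{p ∣ ℓ} log p) / log ℓ ≤ 1`. Each factor of `Z` exceeds the corresponding factor of the
Euler product at `1 + δ` by at most `exp (δ log p / (p - 1))`, so `Z ≤ e^{δK} ζ(1 + δ) ≤ e^{δK} (1 + 1/δ)`,
and `δ = 1 / (K + 1)` gives `Z ≤ e (K + 2)`.
-/

open Real Classical

open Finset

noncomputable def natRpowNegHom (σ : ℝ) : ℕ →* ℝ where
  toFun n := (n : ℝ) ^ (-σ)
  map_one' := by simp
  map_mul' m n := by push_cast; exact mul_rpow (Nat.cast_nonneg _) (Nat.cast_nonneg _)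

lemma hasSum_rpow_neg_factoredNumbers {σ : ℝ} (hσ : 0 < σ) (s : Finset ℕ) :
    HasSum (fun m : Nat.factoredNumbers s ↦ (m : ℝ) ^ (-σ))
      (∏ p ∈ s with p.Prime, (1 - (p : ℝ) ^ (-σ))⁻¹) := by
  refine (EulerProduct.summable_and_hasSum_factoredNumbers_prod_filter_prime_geometric
    (f := natRpowNegHom σ) (fun hp ↦ ?_) s).2
  have hp1 : (1 : ℝ) < _ := Nat.one_lt_cast.mpr hp.one_lt
  simpa [natRpowNegHom, abs_of_nonneg (rpow_nonneg (Nat.cast_nonneg _) _)]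
    using rpow_lt_one_of_one_lt_of_neg hp1 (neg_neg_of_pos hσ)

lemma hasSum_inv_factoredNumbers (s : Finset ℕ) :
    HasSum (fun m : Nat.factoredNumbers s ↦ (m : ℝ)⁻¹)
      (∏ p ∈ s with p.Prime, (1 - (p : ℝ)⁻¹)⁻¹) := by
  simpa only [rpow_neg_one] using hasSum_rpow_neg_factoredNumbers one_pos s

lemma log_pow_mul_div {x y : ℝ} (hx : 0 < x) (hy : 0 < y) (k : ℕ) :
    log (x ^ k * y) / (x ^ k * y) = k * log x * x⁻¹ ^ k * y⁻¹ + x⁻¹ ^ k * (log y / y) := by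
  rw [log_mul (by positivity) hy.ne', log_pow, inv_pow]
  field_simp

lemma hasSum_log_div_factoredNumbers (s : Finset ℕ) :
    HasSum (fun m : Nat.factoredNumbers s ↦ log m / m)
      ((∑ p ∈ s with p.Prime, log p / (p - 1)) * ∏ p ∈ s with p.Prime, (1 - (p : ℝ)⁻¹)⁻¹) := by
  induction s using Finset.induction with
  | empty =>
    have h1 (m : Nat.factoredNumbers ∅) : (m : ℕ) = 1 := by simpa using m.2
    simp [h1]
  | insert p s hps ih =>
    by_cases hp : p.Prime
    swap
    · rwa [Nat.factoredNumbers_insert s hp, filter_insert, if_neg hp]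
    have hp1 : (1 : ℝ) < p := Nat.one_lt_cast.mpr hp.one_lt
    have hr : ‖(p : ℝ)⁻¹‖ < 1 := by
      rw [norm_inv, Real.norm_natCast]; exact inv_lt_one_of_one_lt₀ hp1
    have hpos (m : Nat.factoredNumbers s) : (0 : ℝ) < m :=
      Nat.cast_pos.mpr (Nat.pos_of_ne_zero (Nat.ne_zero_of_mem_factoredNumbers m.2))
    have hZ := hasSum_inv_factoredNumbers s
    have hgeom := hasSum_geometric_of_norm_lt_one hr
    have hderiv := (hasSum_coe_mul_geometric_of_norm_lt_one hr).mul_left (log p)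
    have hsum := (hderiv.mul hZ (hderiv.summable.mul_of_nonneg hZ.summable
      (fun k ↦ by positivity) (fun m ↦ (inv_pos.mpr (hpos m)).le))).add
      (hgeom.mul ih (hgeom.summable.mul_of_nonneg ih.summable
      (fun k ↦ by positivity) (fun m ↦ div_nonneg (log_natCast_nonneg _) (hpos m).le)))
    have hps' : p ∉ s.filter Nat.Prime := fun h ↦ hps (mem_filter.1 h).1
    rw [filter_insert, if_pos hp, sum_insert hps', prod_insert hps',
      ← (Nat.equivProdNatFactoredNumbers hp hps).hasSum_iff]
    have hp0 : (p : ℝ) - 1 ≠ 0 := by linarith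
    set K := ∑ q ∈ s with q.Prime, log q / (q - 1)
    set Z := ∏ q ∈ s with q.Prime, (1 - (q : ℝ)⁻¹)⁻¹
    rw [show (log p / (p - 1) + K) * ((1 - (p : ℝ)⁻¹)⁻¹ * Z) =
      log p * ((p : ℝ)⁻¹ / (1 - (p : ℝ)⁻¹) ^ 2) * Z + (1 - (p : ℝ)⁻¹)⁻¹ * (K * Z) by field_simp]
    refine hsum.congr_fun fun ⟨k, m⟩ ↦ ?_
    simp only [Function.comp_apply, Nat.equivProdNatFactoredNumbers_apply', Nat.cast_mul,
      Nat.cast_pow, log_pow_mul_div (by positivity : (0 : ℝ) < p) (hpos m)]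
    ring

lemma inv_one_sub_inv_le_exp_mul_inv_one_sub_rpow {x δ : ℝ} (hx : 1 < x) (hδ : 0 ≤ δ) :
    (1 - x⁻¹)⁻¹ ≤ exp (δ * (log x / (x - 1))) * (1 - x ^ (-(1 + δ)))⁻¹ := by
  have hx0 : 0 < x := by linarith
  have ha : 0 < 1 - x⁻¹ := sub_pos.mpr (inv_lt_one_of_one_lt₀ hx)
  have hb : 0 < 1 - x ^ (-(1 + δ)) := sub_pos.mpr (rpow_lt_one_of_one_lt_of_neg hx (by linarith))
  have hrpow : x ^ (-(1 + δ)) = x⁻¹ * exp (-(δ * log x)) := by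
    rw [rpow_def_of_pos hx0, show log x * -(1 + δ) = -log x + -(δ * log x) by ring, exp_add,
      exp_neg, exp_log hx0]
  rw [← div_eq_mul_inv, le_div_iff₀ hb, inv_mul_le_iff₀ ha]
  calc 1 - x ^ (-(1 + δ)) ≤ 1 - x⁻¹ * (1 - δ * log x) := by
        rw [hrpow]
        gcongr
        linarith [add_one_le_exp (-(δ * log x))]
    _ = (1 - x⁻¹) * (1 + δ * (log x / (x - 1))) := by
        have : x - 1 ≠ 0 := by linarith
        field_simp
        ring
    _ ≤ (1 - x⁻¹) * exp (δ * (log x / (x - 1))) := by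
        gcongr
        linarith [add_one_le_exp (δ * (log x / (x - 1)))]

lemma tsum_rpow_neg_one_add_le {δ : ℝ} (hδ : 0 < δ) :
    ∑' n : ℕ, (n : ℝ) ^ (-(1 + δ)) ≤ 1 + δ⁻¹ := by
  have hzeta := ZetaAsymptotics.zeta_limit_aux1 (s := 1 + δ) (by linarith)
  have hterm : 0 ≤ ZetaAsymptotics.termTSum (1 + δ) :=
    tsum_nonneg fun n ↦ ZetaAsymptotics.term_nonneg _ _
  rw [(Real.summable_nat_rpow.mpr (by linarith)).tsum_eq_zero_add,
    Nat.cast_zero, zero_rpow (by linarith)]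
  have hshift (n : ℕ) : ((n + 1 : ℕ) : ℝ) ^ (-(1 + δ)) = 1 / ((n : ℝ) + 1) ^ (1 + δ) := by
    rw [rpow_neg (by positivity), one_div, Nat.cast_add_one]
  simp only [hshift]
  rw [add_sub_cancel_left, one_div δ] at hzeta
  linarith [mul_nonneg (by linarith : (0 : ℝ) ≤ 1 + δ) hterm]

lemma prod_inv_one_sub_inv_le_exp_mul (s : Finset ℕ) {δ : ℝ} (hδ : 0 < δ) :
    ∏ p ∈ s with p.Prime, (1 - (p : ℝ)⁻¹)⁻¹
      ≤ exp (δ * ∑ p ∈ s with p.Prime, log p / (p - 1)) * (1 + δ⁻¹) := by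
  have hp1 {p : ℕ} (hp : p ∈ s.filter Nat.Prime) : (1 : ℝ) < p :=
    Nat.one_lt_cast.mpr (mem_filter.1 hp).2.one_lt
  calc ∏ p ∈ s with p.Prime, (1 - (p : ℝ)⁻¹)⁻¹
      ≤ ∏ p ∈ s with p.Prime, exp (δ * (log p / (p - 1))) * (1 - (p : ℝ) ^ (-(1 + δ)))⁻¹ :=
        prod_le_prod (fun p hp ↦ (inv_pos.mpr (sub_pos.mpr (inv_lt_one_of_one_lt₀ (hp1 hp)))).le)
          fun p hp ↦ inv_one_sub_inv_le_exp_mul_inv_one_sub_rpow (hp1 hp) hδ.le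
    _ = exp (δ * ∑ p ∈ s with p.Prime, log p / (p - 1))
          * ∑' m : Nat.factoredNumbers s, (m : ℝ) ^ (-(1 + δ)) := by
        rw [prod_mul_distrib, ← exp_sum, mul_sum,
          (hasSum_rpow_neg_factoredNumbers (by linarith) s).tsum_eq]
    _ ≤ exp (δ * ∑ p ∈ s with p.Prime, log p / (p - 1)) * (1 + δ⁻¹) := by
        gcongr
        exact (Summable.tsum_subtype_le _ _ (fun n ↦ by positivity)
          (Real.summable_nat_rpow.mpr (by linarith))).trans (tsum_rpow_neg_one_add_le hδ)

lemma sum_log_div_sub_one_nonneg (s : Finset ℕ) :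
    0 ≤ ∑ p ∈ s with p.Prime, log p / ((p : ℝ) - 1) :=
  sum_nonneg fun p hp ↦ div_nonneg (log_natCast_nonneg p)
    (sub_nonneg.mpr (Nat.one_le_cast.mpr (mem_filter.1 hp).2.one_le))

lemma prod_inv_one_sub_inv_le_exp_one_mul (s : Finset ℕ) :
    ∏ p ∈ s with p.Prime, (1 - (p : ℝ)⁻¹)⁻¹
      ≤ exp 1 * (∑ p ∈ s with p.Prime, log p / (p - 1) + 2) := by
  set K := ∑ p ∈ s with p.Prime, log p / (p - 1)
  have hK : 0 ≤ K := sum_log_div_sub_one_nonneg s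
  have h := prod_inv_one_sub_inv_le_exp_mul s (δ := (K + 1)⁻¹) (by positivity)
  rw [inv_inv] at h
  refine h.trans (mul_le_mul (exp_le_exp.mpr ?_) (by linarith) (by linarith) (exp_pos 1).le)
  rw [inv_mul_le_iff₀ (by linarith)]
  linarith

lemma tsum_log_div_factoredNumbers_le (s : Finset ℕ) :
    ∑' m : Nat.factoredNumbers s, log m / m
      ≤ exp 1 * (∑ p ∈ s with p.Prime, log p / (p - 1))
          * (∑ p ∈ s with p.Prime, log p / (p - 1) + 2) := by
  rw [(hasSum_log_div_factoredNumbers s).tsum_eq, mul_comm (exp 1), mul_assoc]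
  exact mul_le_mul_of_nonneg_left (prod_inv_one_sub_inv_le_exp_one_mul s)
    (sum_log_div_sub_one_nonneg s)

lemma sum_primeFactors_log_le (n : ℕ) : ∑ p ∈ n.primeFactors, log p ≤ log n := by
  rcases n.eq_zero_or_pos with rfl | hn
  · simp
  rw [← log_prod fun p hp ↦ Nat.cast_ne_zero.mpr (Nat.prime_of_mem_primeFactors hp).ne_zero,
    ← Nat.cast_prod]
  exact log_le_log (Nat.cast_pos.mpr (Nat.pos_of_dvd_of_pos (Nat.prod_primeFactors_dvd n) hn))
    (Nat.cast_le.mpr (Nat.le_of_dvd hn (Nat.prod_primeFactors_dvd n)))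

lemma sum_primesLE_div_mul_log_le (N : ℕ) :
    ∑ p ∈ N.primesLE, ((N / p : ℕ) : ℝ) * log p ≤ N * log N := by
  calc ∑ p ∈ N.primesLE, ((N / p : ℕ) : ℝ) * log p
      = ∑ p ∈ N.primesLE, ∑ n ∈ Ioc 0 N with p ∣ n, log p := by
        simp [Nat.Ioc_filter_dvd_card_eq_div]
    _ = ∑ n ∈ Ioc 0 N, ∑ p ∈ n.primeFactors, log p := by
        refine sum_comm' fun p n ↦ ?_
        simp only [Nat.mem_primesLE, mem_filter, mem_Ioc, Nat.mem_primeFactors]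
        constructor
        · rintro ⟨⟨-, hp⟩, ⟨hn, hnN⟩, hpn⟩
          exact ⟨⟨hp, hpn, hn.ne'⟩, hn, hnN⟩
        · rintro ⟨⟨hp, hpn, -⟩, hn, hnN⟩
          exact ⟨⟨(Nat.le_of_dvd hn hpn).trans hnN, hp⟩, ⟨hn, hnN⟩, hpn⟩
    _ ≤ ∑ n ∈ Ioc 0 N, log N := by
        refine sum_le_sum fun n hn ↦ (sum_primeFactors_log_le n).trans ?_
        have hn := mem_Ioc.1 hn
        exact log_le_log (Nat.cast_pos.mpr hn.1) (Nat.cast_le.mpr hn.2)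
    _ = N * log N := by simp

lemma sum_primesLE_log_div_le (N : ℕ) :
    ∑ p ∈ N.primesLE, log p / p ≤ log N + log 4 := by
  rcases N.eq_zero_or_pos with rfl | hN
  · simp only [Nat.primesLE_zero, sum_empty, Nat.cast_zero, log_zero, zero_add]
    positivity
  have hN' : (0 : ℝ) < N := Nat.cast_pos.mpr hN
  have htheta : ∑ p ∈ N.primesLE, log p ≤ N * log 4 := by
    rw [← Chebyshev.theta_eq_sum_primesLE_log, mul_comm]
    exact Chebyshev.theta_le_log4_mul_x (Nat.cast_nonneg N)
  rw [← mul_le_mul_iff_right₀ hN', mul_add, mul_sum]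
  calc ∑ p ∈ N.primesLE, (N : ℝ) * (log p / p)
      ≤ ∑ p ∈ N.primesLE, (((N / p : ℕ) : ℝ) * log p + log p) := by
        refine sum_le_sum fun p hp ↦ ?_
        have hfloor : (N : ℝ) / p ≤ (N / p : ℕ) + 1 := by
          rw [← Nat.floor_div_eq_div (K := ℝ)]
          exact (Nat.lt_floor_add_one _).le
        calc (N : ℝ) * (log p / p) = N / p * log p := by ring
          _ ≤ ((N / p : ℕ) + 1) * log p := by gcongr
          _ = _ := by ring
    _ ≤ N * log N + N * log 4 := by
        rw [sum_add_distrib]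
        exact add_le_add (sum_primesLE_div_mul_log_le N) htheta

lemma sum_primeFactors_log_div_sub_one_le (ℓ N : ℕ) (hN : 0 < N) (hℓN : log ℓ ≤ N) :
    ∑ p ∈ ℓ.primeFactors, log p / (p - 1) ≤ 2 * (log N + log 4) + 1 := by
  have hp2 {p : ℕ} (hp : p ∈ ℓ.primeFactors) : (2 : ℝ) ≤ p :=
    Nat.ofNat_le_cast.mpr (Nat.prime_of_mem_primeFactors hp).two_le
  have hsmall : ∑ p ∈ ℓ.primeFactors with p ≤ N, log p / (p - 1) ≤ 2 * (log N + log 4) :=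
    calc ∑ p ∈ ℓ.primeFactors with p ≤ N, log p / (p - 1)
        ≤ ∑ p ∈ ℓ.primeFactors with p ≤ N, 2 * (log p / p) := by
          refine sum_le_sum fun p hp ↦ ?_
          have := hp2 (mem_filter.1 hp).1
          rw [mul_div_assoc', div_le_div_iff₀ (by linarith) (by linarith)]
          nlinarith [log_natCast_nonneg p]
      _ ≤ ∑ p ∈ N.primesLE, 2 * (log p / p) := by
          refine sum_le_sum_of_subset_of_nonneg (fun p hp ↦ ?_) fun p _ _ ↦ by positivity
          obtain ⟨hp, hpN⟩ := mem_filter.1 hp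
          exact Nat.mem_primesLE.mpr ⟨hpN, Nat.prime_of_mem_primeFactors hp⟩
      _ ≤ 2 * (log N + log 4) := by
          rw [← mul_sum]
          gcongr
          exact sum_primesLE_log_div_le N
  have hlarge : ∑ p ∈ ℓ.primeFactors with ¬ p ≤ N, log p / (p - 1) ≤ 1 :=
    calc ∑ p ∈ ℓ.primeFactors with ¬ p ≤ N, log p / (p - 1)
        ≤ ∑ p ∈ ℓ.primeFactors with ¬ p ≤ N, log p / N := by
          refine sum_le_sum fun p hp ↦ ?_
          have hNp : (N : ℝ) + 1 ≤ p := by exact_mod_cast not_le.mp (mem_filter.1 hp).2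
          exact div_le_div_of_nonneg_left (log_natCast_nonneg p) (Nat.cast_pos.mpr hN)
            (by linarith)
      _ ≤ log ℓ / N := by
          rw [← sum_div]
          gcongr
          refine (sum_le_sum_of_subset_of_nonneg (filter_subset _ _) ?_).trans
            (sum_primeFactors_log_le ℓ)
          exact fun p _ _ ↦ log_natCast_nonneg p
      _ ≤ 1 := div_le_one_of_le₀ hℓN (Nat.cast_nonneg N)
  rw [← sum_filter_add_sum_filter_not ℓ.primeFactors (· ≤ N)]
  linarith

lemma sum_primeFactors_log_div_sub_one_le_log_log (ℓ : ℕ) :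
    ∑ p ∈ ℓ.primeFactors, log p / (p - 1) ≤ 2 * log (log (ℓ + 2)) + 6 := by
  set t := log ((ℓ : ℝ) + 2)
  have ht : 1 / 2 ≤ t :=
    (log_two_gt_d9.trans_le (log_le_log two_pos (by simp))).le.trans' (by norm_num)
  have hℓt : log ℓ ≤ t := by
    rcases ℓ.eq_zero_or_pos with rfl | hℓ
    · simp only [Nat.cast_zero, log_zero]; linarith
    exact log_le_log (Nat.cast_pos.mpr hℓ) (by linarith)
  have hceil : (⌈t⌉₊ : ℝ) ≤ 3 * t := by linarith [Nat.ceil_lt_add_one (by linarith : 0 ≤ t)]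
  have hceil_pos : 0 < ⌈t⌉₊ := Nat.ceil_pos.mpr (by linarith)
  have hlog_ceil : log ⌈t⌉₊ ≤ log 3 + log t := by
    rw [← log_mul (by norm_num) (by linarith)]
    exact log_le_log (Nat.cast_pos.mpr hceil_pos) hceil
  have hlog4 : log 4 = 2 * log 2 := by
    rw [show (4 : ℝ) = 2 ^ 2 by norm_num, log_pow, Nat.cast_ofNat]
  refine (sum_primeFactors_log_div_sub_one_le ℓ _ hceil_pos (hℓt.trans (Nat.le_ceil t))).trans ?_
  linarith [log_two_lt_d9, log_three_lt_d9]

lemma one_div_twelve_le_log_log {x : ℝ} (hx : 3 ≤ x) : 1 / 12 ≤ log (log x) := by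
  have hlog : 12 / 11 ≤ log x :=
    (log_three_gt_d9.trans_le (log_le_log (by norm_num) hx)).le.trans' (by norm_num)
  have hinv : (log x)⁻¹ ≤ 11 / 12 := by
    rw [inv_le_comm₀ (by linarith) (by norm_num)]; linarith
  linarith [one_sub_inv_le_log_of_pos (show 0 < log x by linarith)]

lemma tsum_ite_primeFactors_dvd_eq_tsum_factoredNumbers {ℓ : ℕ} (hℓ : ℓ ≠ 0) (f : ℕ → ℝ) :
    (∑' u : ℕ, if 0 < u ∧ ∀ p : ℕ, p.Prime → p ∣ u → p ∣ ℓ then f u else 0)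
      = ∑' m : Nat.factoredNumbers ℓ.primeFactors, f m := by
  have hset : {u : ℕ | 0 < u ∧ ∀ p : ℕ, p.Prime → p ∣ u → p ∣ ℓ}
      = Nat.factoredNumbers ℓ.primeFactors := by
    ext u
    simp only [Set.mem_ofPred_eq, Nat.mem_factoredNumbers_iff_primeFactors_subset, subset_iff,
      Nat.mem_primeFactors, Nat.pos_iff_ne_zero]
    grind
  rw [_root_.tsum_subtype, ← hset]
  simp only [Set.indicator_apply, Set.mem_ofPred_eq]

theorem sum_log_div_self_smooth_bound :
    ∃ C : ℝ, 0 < C ∧ ∀ ℓ : ℕ, 1 ≤ ℓ →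
      (∑' u : ℕ, if 0 < u ∧ ∀ p : ℕ, p.Prime → p ∣ u → p ∣ ℓ
        then Real.log u / u else 0)
      ≤ C * (Real.log (Real.log (ℓ + 2))) ^ 2 := by
  refine ⟨7252 * exp 1, by positivity, fun ℓ hℓ ↦ ?_⟩
  set Y := log (log ((ℓ : ℝ) + 2))
  have hY : 1 / 12 ≤ Y :=
    one_div_twelve_le_log_log (by linarith [(Nat.one_le_cast (α := ℝ)).mpr hℓ])
  have hK := sum_primeFactors_log_div_sub_one_le_log_log ℓ
  rw [tsum_ite_primeFactors_dvd_eq_tsum_factoredNumbers (by omega)]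
  refine (tsum_log_div_factoredNumbers_le _).trans ?_
  have hK0 := sum_log_div_sub_one_nonneg ℓ.primeFactors
  rw [filter_true_of_mem fun p ↦ Nat.prime_of_mem_primeFactors] at hK0 ⊢
  calc _ ≤ exp 1 * (74 * Y) * (98 * Y) := by gcongr <;> linarith
    _ = 7252 * exp 1 * Y ^ 2 := by ring
end

section
/- Let η be a function ℕ → ℂ with |η(n)| ≤ 1, let r ≥ 3, and set δ = 1/log r. Then (1/e)·∑_{n ≤ r} η(n)/n + ∫_1^r (δ/t^{1+δ}) (∑_{n ≤ t} η(n)/n) dt = ∑_{n ≤ r} η(n)/n^{1+δ}. Consequently, max_{N ≤ r} |∑_{n ≤ N} η(n)/n| ≥ |∑_{n ≤ r} η(n)/n^{1+δ}|. -/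
/-! The weight `t ↦ t ^ (-δ)` has derivative `-δ / t ^ (1 + δ)`, so Abel summation rewrites
`∑ n ^ (-δ) * c n` as `r ^ (-δ) * S r + ∫₁ʳ δ / t ^ (1 + δ) * S ⌊t⌋ dt`, where `S` is the partial sum
of `c`; for `δ = 1 / log r` one has `r ^ (-δ) = 1 / e`. The weights `r ^ (-δ)` and
`δ / t ^ (1 + δ) dt` on `[1, r]` are nonnegative of total mass `1`, so the right side is an average of
partial sums and is bounded by the largest of them. -/

open Finset Real Complex

theorem hasDerivAt_rpow_neg (δ : ℝ) {t : ℝ} (ht : 0 < t) :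
    HasDerivAt (fun x : ℝ => x ^ (-δ)) (-(δ / t ^ (1 + δ))) t := by
  convert Real.hasDerivAt_rpow_const (p := -δ) (Or.inl ht.ne') using 1
  rw [show -δ - 1 = -(1 + δ) by ring, rpow_neg ht.le]
  ring

theorem continuousOn_div_rpow_one_add (δ : ℝ) {s : Set ℝ} (hs : ∀ t ∈ s, 0 < t) :
    ContinuousOn (fun t : ℝ => δ / t ^ (1 + δ)) s :=
  continuousOn_const.div (continuousOn_id.rpow_const fun t ht => Or.inl (hs t ht).ne')
    fun t ht => (rpow_pos_of_pos (hs t ht) _).ne'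

theorem integral_div_rpow_one_add (δ : ℝ) {a b : ℝ} (ha : 0 < a) (hab : a ≤ b) :
    ∫ t in a..b, δ / t ^ (1 + δ) = a ^ (-δ) - b ^ (-δ) := by
  have hpos : ∀ t ∈ Set.uIcc a b, 0 < t := fun t ht =>
    ha.trans_le (Set.uIcc_of_le hab ▸ ht).1
  rw [intervalIntegral.integral_eq_sub_of_hasDerivAt (f := fun x => -x ^ (-δ))
    (fun t ht => by simpa only [neg_neg] using (hasDerivAt_rpow_neg δ (hpos t ht)).fun_neg)
    ((continuousOn_div_rpow_one_add δ hpos).intervalIntegrable)]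
  ring

theorem sum_Icc_zero_update_zero {M : Type*} [AddCommMonoid M] (f : ℕ → M → M)
    (hf : ∀ k, f k 0 = 0) (c : ℕ → M) (N : ℕ) :
    ∑ k ∈ Icc 0 N, f k (Function.update c 0 0 k) = ∑ k ∈ Icc 1 N, f k (c k) := by
  rw [← insert_Icc_add_one_left_eq_Icc N.zero_le, sum_insert (by simp), Function.update_self,
    hf, zero_add, zero_add]
  exact sum_congr rfl fun k hk => by
    rw [Function.update_of_ne (Nat.one_le_iff_ne_zero.mp (mem_Icc.mp hk).1)]

theorem sum_rpow_neg_mul_eq (c : ℕ → ℂ) (δ : ℝ) {m : ℕ} (hm : 1 ≤ m) :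
    (((m : ℝ) ^ (-δ) : ℝ) : ℂ) * ∑ k ∈ Icc 1 m, c k
        + ∫ t in (1 : ℝ)..m, ((δ / t ^ (1 + δ) : ℝ) : ℂ) * ∑ k ∈ Icc 1 ⌊t⌋₊, c k
      = ∑ k ∈ Icc 1 m, (((k : ℝ) ^ (-δ) : ℝ) : ℂ) * c k := by
  set f : ℝ → ℂ := fun t => ((t ^ (-δ) : ℝ) : ℂ)
  have hpos : ∀ t ∈ Set.Icc (1 : ℝ) m, 0 < t := fun t ht => one_pos.trans_le ht.1
  have hderiv : ∀ t ∈ Set.Icc (1 : ℝ) m, HasDerivAt f (-((δ / t ^ (1 + δ) : ℝ) : ℂ)) t :=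
    fun t ht => by simpa using (hasDerivAt_rpow_neg δ (hpos t ht)).ofReal_comp
  -- Mathlib's Abel summation sums over `Icc 0` and needs `c 0 = 0`, hence the `update`.
  have habel := sum_mul_eq_sub_integral_mul₀' (Function.update c 0 0) (f := f) (by simp) m
    (fun t ht => (hderiv t ht).differentiableAt) ?_
  · simp only [sum_Icc_zero_update_zero (fun k x => f k * x) (fun k => mul_zero _),
      sum_Icc_zero_update_zero (fun _ x => x) (fun _ => rfl)] at habel
    rw [MeasureTheory.setIntegral_congr_fun measurableSet_Ioc fun t ht => by
        rw [(hderiv t (Set.Ioc_subset_Icc_self ht)).deriv, neg_mul],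
      MeasureTheory.integral_neg, ← intervalIntegral.integral_of_le (by exact_mod_cast hm)]
      at habel
    rw [habel, sub_neg_eq_add]
  · refine (MeasureTheory.integrableOn_congr_fun (fun t ht => (hderiv t ht).deriv)
      measurableSet_Icc).mpr ?_
    exact (continuous_ofReal.comp_continuousOn
      (continuousOn_div_rpow_one_add δ hpos)).neg.integrableOn_Icc

theorem norm_sum_rpow_neg_mul_le (c : ℕ → ℂ) {δ : ℝ} (hδ : 0 < δ) {m : ℕ} (hm : 1 ≤ m) {M : ℝ}
    (hS : ∀ N ∈ Icc 1 m, ‖∑ k ∈ Icc 1 N, c k‖ ≤ M) :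
    ‖∑ k ∈ Icc 1 m, (((k : ℝ) ^ (-δ) : ℝ) : ℂ) * c k‖ ≤ M := by
  have hm' : (1 : ℝ) ≤ m := by exact_mod_cast hm
  have hweight : ∀ t ∈ Set.uIcc (1 : ℝ) m, 0 < t := fun t ht =>
    one_pos.trans_le (Set.uIcc_of_le hm' ▸ ht).1
  have hfirst : ‖(((m : ℝ) ^ (-δ) : ℝ) : ℂ) * ∑ k ∈ Icc 1 m, c k‖ ≤ (m : ℝ) ^ (-δ) * M := by
    rw [norm_mul, norm_real, norm_of_nonneg (by positivity)]
    exact mul_le_mul_of_nonneg_left (hS m (mem_Icc.mpr ⟨hm, le_rfl⟩)) (by positivity)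
  have hintegral : ‖∫ t in (1 : ℝ)..m, ((δ / t ^ (1 + δ) : ℝ) : ℂ) * ∑ k ∈ Icc 1 ⌊t⌋₊, c k‖
      ≤ ∫ t in (1 : ℝ)..m, δ / t ^ (1 + δ) * M := by
    refine intervalIntegral.norm_integral_le_of_norm_le hm' (Filter.Eventually.of_forall
      fun t ht => ?_) ((continuousOn_div_rpow_one_add δ hweight).intervalIntegrable.mul_const M)
    have ht0 : 0 < t := one_pos.trans ht.1
    rw [norm_mul, norm_real, norm_of_nonneg (by positivity)]
    refine mul_le_mul_of_nonneg_left (hS _ (mem_Icc.mpr ⟨?_, ?_⟩)) (by positivity)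
    · exact (Nat.one_le_floor_iff t).mpr ht.1.le
    · exact Nat.floor_le_of_le ht.2
  rw [intervalIntegral.integral_mul_const, integral_div_rpow_one_add δ one_pos hm', one_rpow]
    at hintegral
  rw [← sum_rpow_neg_mul_eq c δ hm]
  calc _ ≤ (m : ℝ) ^ (-δ) * M + (1 - (m : ℝ) ^ (-δ)) * M :=
        (norm_add_le _ _).trans (add_le_add hfirst hintegral)
    _ = M := by ring

theorem div_rpow_one_add_eq (z : ℂ) (δ : ℝ) {x : ℝ} (hx : 0 < x) :
    z / ((x ^ (1 + δ) : ℝ) : ℂ) = ((x ^ (-δ) : ℝ) : ℂ) * (z / x) := by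
  have hxδ : x ^ δ ≠ 0 := (rpow_pos_of_pos hx δ).ne'
  rw [rpow_add hx, rpow_one, rpow_neg hx.le]
  push_cast
  field_simp

theorem mellin_truncation_identity_general (η : ℕ → ℂ)
    (r : ℕ) (hr : 3 ≤ r) :
    (1 / Real.exp 1 : ℂ) * (∑ n ∈ Finset.Icc 1 r, η n / n)
        + ∫ t in (1 : ℝ)..(r : ℝ),
            (((1 / Real.log r) / t ^ ((1 : ℝ) + 1 / Real.log r) : ℝ) : ℂ)
              * ∑ n ∈ Finset.Icc 1 ⌊t⌋₊, η n / n
      = ∑ n ∈ Finset.Icc 1 r, η n / ((n : ℝ) ^ ((1 : ℝ) + 1 / Real.log r) : ℝ)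
    ∧ ∃ N ∈ Finset.Icc 1 r,
        ‖∑ n ∈ Finset.Icc 1 N, η n / n‖
          ≥ ‖∑ n ∈ Finset.Icc 1 r, η n / ((n : ℝ) ^ ((1 : ℝ) + 1 / Real.log r) : ℝ)‖ := by
  have hr1 : (1 : ℝ) < r := by exact_mod_cast (by omega : 1 < r)
  set δ := 1 / Real.log r with hδ_def
  have hδ : 0 < δ := one_div_pos.mpr (log_pos hr1)
  have hrδ : (r : ℝ) ^ (-δ) = 1 / Real.exp 1 := by
    rw [rpow_neg (by positivity), hδ_def, one_div, one_div, rpow_inv_log (by positivity) hr1.ne']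
  have hsum : ∑ n ∈ Icc 1 r, η n / (((n : ℝ) ^ (1 + δ) : ℝ) : ℂ)
      = ∑ n ∈ Icc 1 r, (((n : ℝ) ^ (-δ) : ℝ) : ℂ) * (η n / n) :=
    sum_congr rfl fun n hn => div_rpow_one_add_eq _ δ (Nat.cast_pos.mpr (mem_Icc.mp hn).1)
  obtain ⟨N, hN, hmax⟩ := exists_max_image (Icc 1 r) (fun N => ‖∑ n ∈ Icc 1 N, η n / n‖)
    ⟨1, mem_Icc.mpr ⟨le_rfl, by omega⟩⟩
  refine ⟨?_, N, hN, ?_⟩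
  · rw [hsum, ← sum_rpow_neg_mul_eq _ δ (by omega), hrδ]
    rw [ofReal_div, ofReal_one]
  · rw [hsum]
    exact norm_sum_rpow_neg_mul_le _ hδ (by omega) hmax

theorem mellin_truncation_identity (η : ℕ → ℂ) (hη : ∀ n, ‖η n‖ ≤ 1)
    (r : ℕ) (hr : 3 ≤ r) :
    (1 / Real.exp 1 : ℂ) * (∑ n ∈ Finset.Icc 1 r, η n / n)
        + ∫ t in (1 : ℝ)..(r : ℝ),
            (((1 / Real.log r) / t ^ ((1 : ℝ) + 1 / Real.log r) : ℝ) : ℂ)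
              * ∑ n ∈ Finset.Icc 1 ⌊t⌋₊, η n / n
      = ∑ n ∈ Finset.Icc 1 r, η n / ((n : ℝ) ^ ((1 : ℝ) + 1 / Real.log r) : ℝ)
    ∧ ∃ N ∈ Finset.Icc 1 r,
        ‖∑ n ∈ Finset.Icc 1 N, η n / n‖
          ≥ ‖∑ n ∈ Finset.Icc 1 r, η n / ((n : ℝ) ^ ((1 : ℝ) + 1 / Real.log r) : ℝ)‖ :=
  mellin_truncation_identity_general η r hr
end

section
/- Let p be a prime, a ≥ 1 an integer, and let w be a complex number with |w| = 1 or w = 0 (more generally |w| ≤ 1). Then (1/p^{a-1})·|(1 - 1/p)·(p^a - w^a)/(p - w) + w^{a-1}/p| ≤ 1, where for w with |w| ≤ 1 and w ≠ p we interpret (p^a - w^a)/(p - w) = ∑_{j=0}^{a-1} p^j w^{a-1-j}. -/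
open Finset

/-!
The triangle inequality together with `‖w‖ ≤ 1` bounds the expression by its value at `w = 1`,
where `(1 - 1/p) (p^a - 1)/(p - 1) + 1/p` telescopes to exactly `p^(a-1)`.
-/

theorem norm_sum_pow_mul_pow_le {R : Type*} [NormedRing R] [NormOneClass R] (x w : R)
    (hw : ‖w‖ ≤ 1) (n : ℕ) :
    ‖∑ j ∈ range n, x ^ j * w ^ (n - 1 - j)‖ ≤ ∑ j ∈ range n, ‖x‖ ^ j := by
  refine (norm_sum_le _ _).trans (sum_le_sum fun j _ => ?_)
  calc ‖x ^ j * w ^ (n - 1 - j)‖ ≤ ‖x‖ ^ j * ‖w‖ ^ (n - 1 - j) :=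
        (norm_mul_le _ _).trans
          (mul_le_mul (norm_pow_le _ _) (norm_pow_le _ _) (norm_nonneg _) (by positivity))
    _ ≤ ‖x‖ ^ j := mul_le_of_le_one_right (by positivity) (pow_le_one₀ (norm_nonneg w) hw)

theorem one_sub_one_div_mul_geom_sum_add_one_div {K : Type*} [Field K] {x : K} (hx : x ≠ 0)
    (n : ℕ) : (1 - 1 / x) * ∑ j ∈ range (n + 1), x ^ j + 1 / x = x ^ n := by
  have hgeom := geom_sum_mul x (n + 1)
  field_simp
  linear_combination hgeom

theorem norm_one_sub_one_div_mul_sum_add_div_le {x : ℝ} (hx : 1 ≤ x) {w : ℂ} (hw : ‖w‖ ≤ 1)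
    (n : ℕ) :
    ‖(1 - 1 / (x : ℂ)) * ∑ j ∈ range (n + 1), (x : ℂ) ^ j * w ^ (n - j) + w ^ n / x‖
      ≤ x ^ n := by
  have hx0 : x ≠ 0 := by positivity
  have hcoeff_nonneg : 0 ≤ 1 - 1 / x := sub_nonneg.2 ((div_le_one₀ (by positivity)).2 hx)
  have hcoeff : ‖1 - 1 / (x : ℂ)‖ = 1 - 1 / x := by
    rw [← Complex.ofReal_one, ← Complex.ofReal_div, ← Complex.ofReal_sub, Complex.norm_real,
      Real.norm_of_nonneg hcoeff_nonneg]
  have hsum := norm_sum_pow_mul_pow_le (x : ℂ) w hw (n + 1)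
  rw [Complex.norm_real, Real.norm_of_nonneg (by positivity), Nat.add_sub_cancel] at hsum
  have hlast : ‖w ^ n / (x : ℂ)‖ ≤ 1 / x := by
    rw [norm_div, norm_pow, Complex.norm_real, Real.norm_of_nonneg (by positivity)]
    gcongr
    exact pow_le_one₀ (norm_nonneg w) hw
  calc _ ≤ ‖1 - 1 / (x : ℂ)‖ * ‖∑ j ∈ range (n + 1), (x : ℂ) ^ j * w ^ (n - j)‖
          + ‖w ^ n / (x : ℂ)‖ := (norm_add_le _ _).trans_eq (by rw [norm_mul])
    _ ≤ (1 - 1 / x) * ∑ j ∈ range (n + 1), x ^ j + 1 / x := by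
        rw [hcoeff]
        gcongr
    _ = x ^ n := one_sub_one_div_mul_geom_sum_add_one_div hx0 n

theorem prime_power_case (p : ℕ) (hp : p.Prime) (a : ℕ) (ha : 1 ≤ a)
    (w : ℂ) (hw : ‖w‖ ≤ 1) :
    (1 / (p : ℝ) ^ (a - 1))
      * ‖(1 - 1 / (p : ℂ)) * (∑ j ∈ Finset.range a, (p : ℂ) ^ j * w ^ (a - 1 - j))
          + w ^ (a - 1) / p‖ ≤ 1 := by
  obtain ⟨n, rfl⟩ := Nat.exists_eq_add_of_le' ha
  have hp1 : (1 : ℝ) ≤ p := by exact_mod_cast hp.one_lt.le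
  have key := norm_one_sub_one_div_mul_sum_add_div_le hp1 hw n
  push_cast at key
  rw [Nat.add_sub_cancel, one_div_mul_eq_div, div_le_one (by positivity)]
  exact key
end

section
/- For any complex numbers u, v on the closed unit disc, |2u - v - 1| / (|2 - u| · |3 - v|) ≤ 2/3. -/
/-!
For real `a` with `|a| ≥ 1` and `‖z‖ ≤ 1` one has `‖a z - 1‖ ≤ ‖a - z‖`, because
`‖a - z‖² - ‖a z - 1‖² = (a² - 1)(1 - ‖z‖²)`. The numerator splits as
`2u - v - 1 = (3 - v)(2u - 1)/3 - (2 - u)(3v - 1)/4 - (2 - u)(3 - v)/12`,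
so by the triangle inequality it is at most `(1/3 + 1/4 + 1/12) ‖2 - u‖ ‖3 - v‖`.
-/

open Complex

theorem norm_sq_sub_sub_norm_sq_mul_sub_one (a : ℝ) (z : ℂ) :
    ‖(a : ℂ) - z‖ ^ 2 - ‖a * z - 1‖ ^ 2 = (a ^ 2 - 1) * (1 - ‖z‖ ^ 2) := by
  simp only [Complex.sq_norm, normSq_apply, sub_re, sub_im, mul_re, mul_im, ofReal_re, ofReal_im,
    one_re, one_im]
  ring

theorem norm_mul_sub_one_le_norm_sub {a : ℝ} (ha : 1 ≤ |a|) {z : ℂ} (hz : ‖z‖ ≤ 1) :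
    ‖a * z - 1‖ ≤ ‖(a : ℂ) - z‖ := by
  have h := norm_sq_sub_sub_norm_sq_mul_sub_one a z
  have : 0 ≤ (a ^ 2 - 1) * (1 - ‖z‖ ^ 2) := by
    apply mul_nonneg <;> nlinarith [sq_abs a, norm_nonneg z]
  exact (sq_le_sq₀ (norm_nonneg _) (norm_nonneg _)).1 (by linarith)

theorem lambda_diff_bound (u v : ℂ) (hu : ‖u‖ ≤ 1) (hv : ‖v‖ ≤ 1) :
    ‖2 * u - v - 1‖ / (‖2 - u‖ * ‖3 - v‖) ≤ 2 / 3 := by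
  have hu' : ‖2 * u - 1‖ ≤ ‖2 - u‖ := by
    exact_mod_cast norm_mul_sub_one_le_norm_sub (a := 2) (by norm_num) hu
  have hv' : ‖3 * v - 1‖ ≤ ‖3 - v‖ := by
    exact_mod_cast norm_mul_sub_one_le_norm_sub (a := 3) (by norm_num) hv
  refine div_le_of_le_mul₀ (by positivity) (by norm_num) ?_
  calc ‖2 * u - v - 1‖
      = ‖(3 - v) * (2 * u - 1) / 3 - (2 - u) * (3 * v - 1) / 4 - (2 - u) * (3 - v) / 12‖ := by
        congr 1; ring
    _ ≤ ‖(3 - v) * (2 * u - 1) / 3‖ + ‖(2 - u) * (3 * v - 1) / 4‖ + ‖(2 - u) * (3 - v) / 12‖ :=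
        norm_sub_le_of_le (norm_sub_le _ _) le_rfl
    _ = ‖3 - v‖ * ‖2 * u - 1‖ / 3 + ‖2 - u‖ * ‖3 * v - 1‖ / 4 + ‖2 - u‖ * ‖3 - v‖ / 12 := by
        simp only [norm_div, norm_mul]; norm_num
    _ ≤ ‖3 - v‖ * ‖2 - u‖ / 3 + ‖2 - u‖ * ‖3 - v‖ / 4 + ‖2 - u‖ * ‖3 - v‖ / 12 := by
        gcongr
    _ = 2 / 3 * (‖2 - u‖ * ‖3 - v‖) := by ring
end

section
/- Let r be a positive integer with at least two distinct prime factors, and let w : {primes dividing r} → ℂ satisfy |w(p)| ≤ 1 for all p | r. Then |1 - (1/φ(r)) ∏_{p^a ∥ r} (w(p)^a - w(p)^{a-1})| ≤ ∏_{p | r} |1 + (1 - w(p))/(p - 1)|. -/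
/-!
Divide Euler's product `φ(r) = ∏ p^(a-1) (p-1)` factor by factor into the product, so that with
`z_p = (1 - w p)/(p - 1)` the subtracted term has norm at most `∏ ‖z_p‖`. It remains to see
`1 + ∏ ‖z_p‖ ≤ ∏ ‖1 + z_p‖`: squaring, `(1 + ∏ aᵢ)² ≤ ∏ (1 + aᵢ²)` holds for at least two real
factors (Cauchy–Schwarz, iterated), and `1 + ‖z‖² ≤ ‖1 + z‖²` because `Re z ≥ 0` when `‖w‖ ≤ 1`.
-/

open Finset

section Ordered

variable {ι R : Type*} [CommRing R] [LinearOrder R] [IsStrictOrderedRing R]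

theorem sq_one_add_mul_prod_le {s : Finset ι} (hs : s.Nonempty) (a : ι → R) (c : R) :
    (1 + c * ∏ i ∈ s, a i) ^ 2 ≤ (1 + c ^ 2) * ∏ i ∈ s, (1 + a i ^ 2) := by
  induction hs using Finset.Nonempty.cons_induction generalizing c with
  | singleton i =>
    simp only [prod_singleton]
    nlinarith [sq_nonneg (c - a i)]
  | cons i t hi ht ih =>
    have hcons : (1 + (c * a i) ^ 2) ≤ (1 + c ^ 2) * (1 + a i ^ 2) := by
      nlinarith [sq_nonneg c, sq_nonneg (a i)]
    have hprod : 0 ≤ ∏ j ∈ t, (1 + a j ^ 2) := prod_nonneg fun j _ => by positivity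
    calc (1 + c * ∏ j ∈ cons i t hi, a j) ^ 2
        = (1 + c * a i * ∏ j ∈ t, a j) ^ 2 := by rw [prod_cons, mul_assoc]
      _ ≤ (1 + (c * a i) ^ 2) * ∏ j ∈ t, (1 + a j ^ 2) := ih _
      _ ≤ (1 + c ^ 2) * (1 + a i ^ 2) * ∏ j ∈ t, (1 + a j ^ 2) := by gcongr
      _ = (1 + c ^ 2) * ∏ j ∈ cons i t hi, (1 + a j ^ 2) := by rw [prod_cons, mul_assoc]

theorem sq_one_add_prod_le_prod_one_add_sq {s : Finset ι} (hs : 2 ≤ s.card) (a : ι → R) :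
    (1 + ∏ i ∈ s, a i) ^ 2 ≤ ∏ i ∈ s, (1 + a i ^ 2) := by
  classical
  obtain ⟨i, hi⟩ : s.Nonempty := card_pos.mp (by omega)
  have hrest : (s.erase i).Nonempty := card_pos.mp (by rw [card_erase_of_mem hi]; omega)
  rw [← mul_prod_erase s a hi, ← mul_prod_erase s (fun j => 1 + a j ^ 2) hi]
  exact sq_one_add_mul_prod_le hrest a (a i)

end Ordered

theorem Complex.one_add_sq_norm_le_sq_norm_one_add {z : ℂ} (hz : 0 ≤ z.re) :
    1 + ‖z‖ ^ 2 ≤ ‖1 + z‖ ^ 2 := by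
  simp only [Complex.sq_norm, Complex.normSq_apply, Complex.add_re, Complex.add_im,
    Complex.one_re, Complex.one_im]
  nlinarith

theorem Complex.one_add_prod_norm_le_prod_norm_one_add {ι : Type*} {s : Finset ι}
    (hs : 2 ≤ s.card) {z : ι → ℂ} (hz : ∀ i ∈ s, 0 ≤ (z i).re) :
    1 + ∏ i ∈ s, ‖z i‖ ≤ ∏ i ∈ s, ‖1 + z i‖ := by
  refine le_of_pow_le_pow_left₀ two_ne_zero (prod_nonneg fun i _ => norm_nonneg _) ?_
  calc (1 + ∏ i ∈ s, ‖z i‖) ^ 2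
      ≤ ∏ i ∈ s, (1 + ‖z i‖ ^ 2) := sq_one_add_prod_le_prod_one_add_sq hs _
    _ ≤ ∏ i ∈ s, ‖1 + z i‖ ^ 2 :=
        prod_le_prod (fun i _ => by positivity)
          fun i hi => one_add_sq_norm_le_sq_norm_one_add (hz i hi)
    _ = (∏ i ∈ s, ‖1 + z i‖) ^ 2 := prod_pow _ _ _

theorem Complex.re_one_sub_div_natCast_sub_one_nonneg {w : ℂ} (hw : ‖w‖ ≤ 1) {n : ℕ}
    (hn : 1 ≤ n) : 0 ≤ ((1 - w) / ((n : ℂ) - 1)).re := by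
  have hcast : (n : ℂ) - 1 = ((n - 1 : ℝ) : ℂ) := by push_cast; rfl
  have hn' : (1 : ℝ) ≤ n := by exact_mod_cast hn
  rw [hcast, Complex.div_ofReal_re, Complex.sub_re, Complex.one_re]
  exact div_nonneg (by linarith [Complex.re_le_norm w]) (by linarith)

theorem norm_pow_sub_pow_pred_le {𝕜 : Type*} [NormedDivisionRing 𝕜] {w : 𝕜} (hw : ‖w‖ ≤ 1)
    (a : ℕ) : ‖w ^ a - w ^ (a - 1)‖ ≤ ‖1 - w‖ := by
  cases a with
  | zero => simp
  | succ n =>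
    rw [Nat.add_sub_cancel, pow_succ, ← mul_sub_one, norm_mul, norm_pow, norm_sub_rev]
    exact mul_le_of_le_one_left (norm_nonneg _) (pow_le_one₀ (norm_nonneg _) hw)

theorem norm_pow_sub_pow_pred_div_le {𝕜 : Type*} [NormedField 𝕜] {w : 𝕜} (hw : ‖w‖ ≤ 1)
    {x : 𝕜} (hx : 1 ≤ ‖x‖) (a : ℕ) (c : 𝕜) :
    ‖(w ^ a - w ^ (a - 1)) / (x ^ (a - 1) * c)‖ ≤ ‖(1 - w) / c‖ := by
  rw [norm_div, norm_div, norm_mul, norm_pow, ← div_div]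
  gcongr
  exact (div_le_self (norm_nonneg _) (one_le_pow₀ hx)).trans (norm_pow_sub_pow_pred_le hw a)

theorem Nat.cast_totient_eq_prod {K : Type*} [Field K] {n : ℕ} (hn : n ≠ 0) :
    (n.totient : K) = ∏ p ∈ n.primeFactors, ((p : K) ^ (n.factorization p - 1) * ((p : K) - 1)) := by
  rw [Nat.totient_eq_prod_factorization hn, Finsupp.prod, Nat.support_factorization,
    Nat.cast_prod]
  refine prod_congr rfl fun p hp => ?_
  rw [Nat.cast_mul, Nat.cast_pow, Nat.cast_sub (Nat.prime_of_mem_primeFactors hp).one_le,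
    Nat.cast_one]

theorem product_term_bound (r : ℕ) (hr : 2 ≤ r.primeFactors.card)
    (w : ℕ → ℂ) (hw : ∀ p ∈ r.primeFactors, ‖w p‖ ≤ 1) :
    ‖1 - (1 / (Nat.totient r : ℂ))
        * ∏ p ∈ r.primeFactors,
            (w p ^ (r.factorization p) - w p ^ (r.factorization p - 1))‖
      ≤ ∏ p ∈ r.primeFactors, ‖1 + (1 - w p) / ((p : ℂ) - 1)‖ := by
  have hr0 : r ≠ 0 := by
    rintro rfl
    simp at hr
  have hp : ∀ p ∈ r.primeFactors, 1 ≤ p := fun p hp => (Nat.prime_of_mem_primeFactors hp).one_le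
  calc ‖1 - (1 / (Nat.totient r : ℂ))
        * ∏ p ∈ r.primeFactors,
            (w p ^ (r.factorization p) - w p ^ (r.factorization p - 1))‖
      ≤ 1 + ‖(1 / (Nat.totient r : ℂ)) * ∏ p ∈ r.primeFactors,
              (w p ^ (r.factorization p) - w p ^ (r.factorization p - 1))‖ := by
        simpa only [norm_one] using norm_sub_le (1 : ℂ) _
    _ ≤ 1 + ∏ p ∈ r.primeFactors, ‖(1 - w p) / ((p : ℂ) - 1)‖ := by
        rw [Nat.cast_totient_eq_prod hr0, one_div_mul_eq_div, ← prod_div_distrib, norm_prod]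
        gcongr with p hpr
        exact norm_pow_sub_pow_pred_div_le (hw p hpr) (by simpa using hp p hpr) _ _
    _ ≤ _ := Complex.one_add_prod_norm_le_prod_norm_one_add hr fun p hpr =>
        Complex.re_one_sub_div_natCast_sub_one_nonneg (hw p hpr) (hp p hpr)
end

section
/- Let p be a prime and j ≥ 2 an integer with p ≤ j. Then ∫_{-1/2}^{1/2} |1 - e(θ)/p|^{-2j} dθ ≥ (c·p/j)·(1 - 1/p)^{-2j} for some absolute positive constant c, where e(θ) = exp(2πiθ). -/
/-!
On the window `|θ| ≤ p / (2j)` the perturbation `(1 - e(θ)) / p` has size at most `2π|θ|/p ≤ π/j`,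
which is at most `(2π/j) (1 - 1/p)` because `p ≥ 2`. Hence `|1 - e(θ)/p| ≤ (1 - 1/p) e^{2π/j}` there,
so the integrand is at least `e^{-4π} (1 - 1/p)^{-2j}` on an interval of length `p/j ≤ 1`,
and the theorem holds with `c = e^{-4π}`.
-/

open Real Complex

section Window

variable {q : ℝ}

lemma norm_exp_two_pi_I_mul (θ : ℝ) : ‖Complex.exp (2 * π * I * θ)‖ = 1 := by
  rw [show (2 * π * I * θ : ℂ) = ((2 * π * θ : ℝ) : ℂ) * I by push_cast; ring]
  exact Complex.norm_exp_ofReal_mul_I _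

lemma norm_one_sub_exp_two_pi_I_mul_le (θ : ℝ) :
    ‖1 - Complex.exp (2 * π * I * θ)‖ ≤ 2 * π * |θ| := by
  rw [show (2 * π * I * θ : ℂ) = I * ((2 * π * θ : ℝ) : ℂ) by push_cast; ring, norm_sub_rev]
  calc ‖Complex.exp (I * ((2 * π * θ : ℝ) : ℂ)) - 1‖ ≤ ‖2 * π * θ‖ :=
        Real.norm_exp_I_mul_ofReal_sub_one_le
    _ = 2 * π * |θ| := by rw [Real.norm_eq_abs, abs_mul, abs_of_pos two_pi_pos]

lemma one_sub_inv_le_norm_one_sub_exp_div (hq : 0 < q) (θ : ℝ) :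
    1 - 1 / q ≤ ‖1 - Complex.exp (2 * π * I * θ) / q‖ := by
  have h : ‖Complex.exp (2 * π * I * θ) / q‖ = 1 / q := by
    rw [norm_div, norm_exp_two_pi_I_mul, Complex.norm_real, Real.norm_of_nonneg hq.le]
  calc 1 - 1 / q = ‖(1 : ℂ)‖ - ‖Complex.exp (2 * π * I * θ) / q‖ := by rw [h, norm_one]
    _ ≤ _ := norm_sub_norm_le _ _

lemma norm_one_sub_exp_div_le (hq : 1 ≤ q) (θ : ℝ) :
    ‖1 - Complex.exp (2 * π * I * θ) / q‖ ≤ 1 - 1 / q + 2 * π * |θ| / q := by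
  have hsplit : 1 - Complex.exp (2 * π * I * θ) / q
      = ((1 - 1 / q : ℝ) : ℂ) + (1 - Complex.exp (2 * π * I * θ)) / q := by
    push_cast; field_simp; ring
  have h1q : 0 ≤ 1 - 1 / q := sub_nonneg.2 (div_le_one_of_le₀ hq (by linarith))
  calc ‖1 - Complex.exp (2 * π * I * θ) / q‖
      ≤ ‖((1 - 1 / q : ℝ) : ℂ)‖ + ‖(1 - Complex.exp (2 * π * I * θ)) / q‖ :=
        hsplit ▸ norm_add_le _ _
    _ ≤ 1 - 1 / q + 2 * π * |θ| / q := by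
        rw [Complex.norm_real, norm_div, Complex.norm_real, Real.norm_of_nonneg h1q,
          Real.norm_of_nonneg (by positivity)]
        gcongr
        exact norm_one_sub_exp_two_pi_I_mul_le θ

lemma norm_one_sub_exp_div_le_mul_exp (hq : 2 ≤ q) {j : ℝ} (hj : 0 < j) {θ : ℝ}
    (hθ : |θ| ≤ q / (2 * j)) :
    ‖1 - Complex.exp (2 * π * I * θ) / q‖ ≤ (1 - 1 / q) * Real.exp (2 * π / j) := by
  have hq0 : 0 < q := by linarith
  have hhalf : 1 / 2 ≤ 1 - 1 / q := by
    have : 1 / q ≤ 1 / 2 := one_div_le_one_div_of_le two_pos hq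
    linarith
  have hθq : 2 * π * |θ| / q ≤ (1 - 1 / q) * (2 * π / j) :=
    calc 2 * π * |θ| / q ≤ 2 * π * (q / (2 * j)) / q := by gcongr
      _ = 1 / 2 * (2 * π / j) := by field_simp
      _ ≤ (1 - 1 / q) * (2 * π / j) := by gcongr
  calc ‖1 - Complex.exp (2 * π * I * θ) / q‖ ≤ 1 - 1 / q + 2 * π * |θ| / q :=
        norm_one_sub_exp_div_le (by linarith) θ
    _ ≤ (1 - 1 / q) * (2 * π / j + 1) := by linarith
    _ ≤ (1 - 1 / q) * Real.exp (2 * π / j) := by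
        gcongr; exact Real.add_one_le_exp _

lemma norm_one_sub_exp_div_pow_le (hq : 2 ≤ q) {j : ℕ} (hj : j ≠ 0) {θ : ℝ}
    (hθ : |θ| ≤ q / (2 * j)) :
    ‖1 - Complex.exp (2 * π * I * θ) / q‖ ^ (2 * j) ≤ Real.exp (4 * π) * (1 - 1 / q) ^ (2 * j) :=
  calc ‖1 - Complex.exp (2 * π * I * θ) / q‖ ^ (2 * j)
      ≤ ((1 - 1 / q) * Real.exp (2 * π / j)) ^ (2 * j) := by
        gcongr; exact norm_one_sub_exp_div_le_mul_exp hq (by positivity) hθ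
    _ = Real.exp (4 * π) * (1 - 1 / q) ^ (2 * j) := by
        rw [mul_pow, ← Real.exp_nat_mul, mul_comm]
        congr 2
        field_simp
        push_cast
        ring

end Window

lemma mul_le_intervalIntegral_of_le_on_Icc {f : ℝ → ℝ} {a b a' b' c : ℝ}
    (ha : a ≤ a') (hab : a' ≤ b') (hb : b' ≤ b) (hf : IntervalIntegrable f MeasureTheory.volume a b)
    (hf0 : ∀ x ∈ Set.Ioc a b, 0 ≤ f x) (hc : ∀ x ∈ Set.Icc a' b', c ≤ f x) :
    (b' - a') * c ≤ ∫ x in a..b, f x :=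
  calc (b' - a') * c = ∫ _ in a'..b', c := by simp
    _ ≤ ∫ x in a'..b', f x :=
        intervalIntegral.integral_mono_on hab intervalIntegrable_const
          (hf.mono_set (by
          rw [Set.uIcc_of_le hab, Set.uIcc_of_le (ha.trans (hab.trans hb))]
          exact Set.Icc_subset_Icc ha hb)) hc
    _ ≤ ∫ x in a..b, f x :=
        intervalIntegral.integral_mono_interval ha hab hb
          ((MeasureTheory.ae_restrict_iff' measurableSet_Ioc).2 (.of_forall hf0)) hf

theorem integral_lower_bound :
    ∃ c : ℝ, 0 < c ∧ ∀ (p j : ℕ), p.Prime → 2 ≤ j → p ≤ j →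
      (∫ θ in (-(1:ℝ)/2)..(1/2),
          (‖1 - Complex.exp (2 * Real.pi * Complex.I * θ) / p‖ ^ (2 * j))⁻¹)
        ≥ (c * p / j) * (((1 - 1 / (p : ℝ)) ^ (2 * j))⁻¹) := by
  refine ⟨Real.exp (-(4 * π)), Real.exp_pos _, fun p j hp hj hpj => ?_⟩
  have hp2 : (2 : ℝ) ≤ p := by exact_mod_cast hp.two_le
  have hj0 : (0 : ℝ) < j := by exact_mod_cast (by omega : 0 < j)
  have hwindow_pos : 0 < (p : ℝ) / (2 * j) := by positivity
  have hwindow_le : (p : ℝ) / (2 * j) ≤ 1 / 2 := by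
    rw [div_le_iff₀ (by positivity)]; linarith [show (p : ℝ) ≤ j by exact_mod_cast hpj]
  have hpos : ∀ θ : ℝ, 0 < ‖1 - Complex.exp (2 * π * I * θ) / (p : ℝ)‖ := fun θ =>
    (sub_pos.2 ((div_lt_one (by linarith)).2 (by linarith))).trans_le
      (one_sub_inv_le_norm_one_sub_exp_div (by linarith) θ)
  simp only [← Complex.ofReal_natCast, ge_iff_le]
  calc Real.exp (-(4 * π)) * p / j * ((1 - 1 / (p : ℝ)) ^ (2 * j))⁻¹
      = (p / (2 * j) - -(p / (2 * j))) *
          (Real.exp (4 * π) * (1 - 1 / (p : ℝ)) ^ (2 * j))⁻¹ := by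
        rw [Real.exp_neg, mul_inv]; field_simp; ring
    _ ≤ _ := by
      refine mul_le_intervalIntegral_of_le_on_Icc (by linarith) (by linarith) hwindow_le
        (Continuous.intervalIntegrable ?_ _ _) (fun θ _ => by positivity) fun θ hθ => ?_
      · exact Continuous.inv₀ (by fun_prop) fun θ => pow_ne_zero _ (hpos θ).ne'
      · exact inv_anti₀ (pow_pos (hpos θ) _)
          (norm_one_sub_exp_div_pow_le hp2 (by omega) (abs_le.2 hθ))
end
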